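/- For a ∈ (0,1], the curve t ↦ (x⁺(t,a), y⁺(t,a)) with x⁺(t,a) = (−a cos(at) + √(1−a²) sin(at))/a and y⁺(t,a) = (−4a√(1−a²) + 2at + 4a√(1−a²) cos²(at) − sin(2at) + 2a² sin(2at))/(4a²) is a solution of the Grushin geodesic equations with x(0) = −1, y(0) = 0, λₓ(0) = √(1−a²), λ_y(0) = a, i.e., it satisfies ẋ = λₓ, ẏ = a x², λ̇ₓ = −a² x with λₓ = ẋ. -/

import Mathlib

/-! `x⁺` is an oscillation of frequency `a`, so `λₓ := ẋ⁺` satisfies `λ̇ₓ = −a² x⁺`. The equation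
`ẏ⁺ = a (x⁺)²` reduces, via `cos 2θ = cos² θ − sin² θ`, to `sin² θ + cos² θ = 1` together with
`√(1 − a²)² = 1 − a²`. -/

/-- The Grushin geodesic (x⁺(·,a), y⁺(·,a)) from the point (−1,0). -/
noncomputable def xplus (a t : ℝ) : ℝ :=
  (-(a * Real.cos (a * t)) + Real.sqrt (1 - a ^ 2) * Real.sin (a * t)) / a

noncomputable def yplus (a t : ℝ) : ℝ :=
  (-(4 * a * Real.sqrt (1 - a ^ 2)) + 2 * a * t
      + 4 * a * Real.sqrt (1 - a ^ 2) * (Real.cos (a * t)) ^ 2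
      - Real.sin (2 * a * t) + 2 * a ^ 2 * Real.sin (2 * a * t)) / (4 * a ^ 2)

open Real

/-- The paper's momentum `λₓ` along `xplus a`. -/
noncomputable def lxplus (a t : ℝ) : ℝ :=
  a * sin (a * t) + √(1 - a ^ 2) * cos (a * t)

theorem hasDerivAt_sin_mul (a t : ℝ) :
    HasDerivAt (fun t => sin (a * t)) (a * cos (a * t)) t := by
  simpa [mul_comm] using ((hasDerivAt_id t).const_mul a).sin

theorem hasDerivAt_cos_mul (a t : ℝ) :
    HasDerivAt (fun t => cos (a * t)) (-(a * sin (a * t))) t := by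
  simpa [mul_comm] using ((hasDerivAt_id t).const_mul a).cos

section

variable {a : ℝ}

theorem hasDerivAt_xplus (ha : a ≠ 0) (t : ℝ) : HasDerivAt (xplus a) (lxplus a t) t := by
  refine ((((hasDerivAt_cos_mul a t).const_mul a).fun_neg.fun_add
    ((hasDerivAt_sin_mul a t).const_mul √(1 - a ^ 2))).div_const a).congr_deriv ?_
  rw [lxplus]
  field_simp

theorem hasDerivAt_lxplus (ha : a ≠ 0) (t : ℝ) :
    HasDerivAt (lxplus a) (-a ^ 2 * xplus a t) t := by
  refine (((hasDerivAt_sin_mul a t).const_mul a).fun_add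
    ((hasDerivAt_cos_mul a t).const_mul √(1 - a ^ 2))).congr_deriv ?_
  rw [xplus]
  field_simp
  ring

theorem hasDerivAt_yplus (ha : a ≠ 0) (ha1 : a ^ 2 ≤ 1) (t : ℝ) :
    HasDerivAt (yplus a) (a * xplus a t ^ 2) t := by
  have hsin2 := hasDerivAt_sin_mul (2 * a) t
  have hy := ((((((hasDerivAt_id t).const_mul (2 * a)).const_add (-(4 * a * √(1 - a ^ 2)))).fun_add
    (((hasDerivAt_cos_mul a t).fun_pow 2).const_mul (4 * a * √(1 - a ^ 2)))).fun_sub hsin2).fun_add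
    (hsin2.const_mul (2 * a ^ 2))).div_const (4 * a ^ 2)
  refine hy.congr_deriv ?_
  have hs : √(1 - a ^ 2) ^ 2 = 1 - a ^ 2 := sq_sqrt (by linarith)
  have hcos2 : cos (2 * a * t) = cos (a * t) ^ 2 - sin (a * t) ^ 2 := by
    rw [mul_assoc, cos_two_mul, ← sin_sq_add_cos_sq (a * t)]; ring
  rw [xplus, hcos2]
  simp only [mul_one, Nat.cast_ofNat, Nat.add_one_sub_one, pow_one]
  field_simp
  linear_combination (-4 * sin (a * t) ^ 2) * hs - 2 * sin_sq_add_cos_sq (a * t)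

end

/-- For a ∈ (0,1], the curve t ↦ (x⁺(t,a), y⁺(t,a)) solves the Grushin
geodesic equations ẋ = λₓ, ẏ = a x², λ̇ₓ = −a² x with x(0) = −1, y(0) = 0,
λₓ(0) = √(1−a²) (and λ_y ≡ a). -/
theorem stmt14 (a : ℝ) (ha0 : 0 < a) (ha1 : a ≤ 1) :
    ∃ lx : ℝ → ℝ,
      (∀ t : ℝ, HasDerivAt (xplus a) (lx t) t) ∧
      (∀ t : ℝ, HasDerivAt (yplus a) (a * (xplus a t) ^ 2) t) ∧
      (∀ t : ℝ, HasDerivAt lx (-a ^ 2 * xplus a t) t) ∧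
      xplus a 0 = -1 ∧ yplus a 0 = 0 ∧ lx 0 = Real.sqrt (1 - a ^ 2) := by
  have ha : a ≠ 0 := ha0.ne'
  have ha_sq : a ^ 2 ≤ 1 := pow_le_one₀ ha0.le ha1
  exact ⟨lxplus a, hasDerivAt_xplus ha, hasDerivAt_yplus ha ha_sq, hasDerivAt_lxplus ha,
    by simp [xplus, ha], by simp [yplus], by simp [lxplus]⟩
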